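/- Let n ≥ 4 and let i be an even integer with 2 ≤ i ≤ n−2. Then, as maps ℝ^n → ℝ^n, (s_0 ∘ [2,n−1] ∘ [1,n−2] ∘ s_n)^{i/2} ∘ [n−i, n−1] ∘ [n−i−1, n−2] ∘ ⋯ ∘ [1, i] = t_{e_1+e_2+⋯+e_i}, where the trailing product consists of the blocks [k, k+i−1] for k = n−i, …, 1. In other words, the element ω_i = (s_0[2,n−1][1,n−2]s_n)^{i/2}[n−i,n−1]⋯[1,i] of the extended affine Weyl group of type D_n^{(1)} acts on ℝ^n as translation by e_1+⋯+e_i. -/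
import Mathlib


noncomputable section

/-- Value of `x : ℝ^n` at the natural (0-indexed) index `m`, or `0` if out of range. -/
def xval {n : ℕ} (x : Fin n → ℝ) (m : ℕ) : ℝ := if h : m < n then x ⟨m, h⟩ else 0

/-- The simple affine reflections of type `D_n^{(1)}` acting on `ℝ^n`:
for `1 ≤ j ≤ n-1`, `sD n j` swaps the `j`-th and `(j+1)`-th coordinates (1-indexed);
`sD n n` is `x ↦ (x₁, …, x_{n−2}, −xₙ, −x_{n−1})`;
`sD n 0` is `x ↦ (1 - x₂, 1 - x₁, x₃, …, xₙ)`. -/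
def sD (n : ℕ) (j : ℕ) (x : Fin n → ℝ) (k : Fin n) : ℝ :=
  if j = 0 then
    if (k : ℕ) = 0 then 1 - xval x 1
    else if (k : ℕ) = 1 then 1 - xval x 0
    else x k
  else if j = n then
    if (k : ℕ) = n - 2 then -xval x (n - 1)
    else if (k : ℕ) = n - 1 then -xval x (n - 2)
    else x k
  else
    if (k : ℕ) = j - 1 then xval x j
    else if (k : ℕ) = j then xval x (j - 1)
    else x k

/-- The block `[k,l] = s_k ∘ s_{k+1} ∘ ⋯ ∘ s_l` (rightmost factor applied first). -/
def blkD (n k l : ℕ) : (Fin n → ℝ) → (Fin n → ℝ) :=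
  (List.range' k (l + 1 - k)).foldr (fun j f => sD n j ∘ f) id

/-- The trailing product `[n−i,n−1] ∘ [n−i−1,n−2] ∘ ⋯ ∘ [1,i]`,
consisting of the blocks `[k, k+i−1]` for `k = n−i, n−i−1, …, 1`. -/
def trailD (n i : ℕ) : (Fin n → ℝ) → (Fin n → ℝ) :=
  ((List.range' 1 (n - i)).reverse).foldr (fun m f => blkD n m (m + i - 1) ∘ f) id

lemma xval_lt {n : ℕ} (x : Fin n → ℝ) {t : ℕ} (h : t < n) : xval x t = x ⟨t, h⟩ := dif_pos h

lemma xval_coe {n : ℕ} (x : Fin n → ℝ) (k : Fin n) : xval x (k : ℕ) = x k := by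
  rw [xval_lt x k.isLt]

lemma sD_mid {n : ℕ} {j : ℕ} (hj1 : 1 ≤ j) (hjn : j < n) (x : Fin n → ℝ) (k : Fin n) :
    sD n j x k = if (k : ℕ) = j - 1 then xval x j
      else if (k : ℕ) = j then xval x (j - 1) else x k := by
  unfold sD
  rw [if_neg (by omega), if_neg (by omega)]

lemma blkD_single (n k : ℕ) : blkD n k k = sD n k := by
  unfold blkD
  have : k + 1 - k = 1 := by omega
  rw [this, List.range'_one]
  rfl

lemma blkD_cons (n k l : ℕ) (h : k ≤ l) :
    blkD n k l = sD n k ∘ blkD n (k + 1) l := by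
  unfold blkD
  have h1 : l + 1 - k = (l + 1 - (k + 1)) + 1 := by omega
  rw [h1, List.range'_succ]
  rfl

lemma blk_apply {n : ℕ} (d : ℕ) (k : ℕ) (hk : 1 ≤ k) (hl : k + d < n) (x : Fin n → ℝ) (m : Fin n) :
    blkD n k (k + d) x m =
      if (m : ℕ) = k - 1 then xval x (k + d)
      else if k ≤ (m : ℕ) ∧ (m : ℕ) ≤ k + d then xval x ((m : ℕ) - 1)
      else x m := by
  induction d generalizing k m with
  | zero =>
    rw [Nat.add_zero, blkD_single, sD_mid hk (by omega)]
    by_cases h1 : (m : ℕ) = k - 1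
    · simp [h1]
    · rw [if_neg h1, if_neg h1]
      by_cases h2 : (m : ℕ) = k
      · rw [if_pos h2, if_pos ⟨by omega, by omega⟩, h2]
      · rw [if_neg h2, if_neg (by omega)]
  | succ d ih =>
    have hkd : k + (d + 1) = (k + 1) + d := by omega
    rw [blkD_cons n k (k + (d+1)) (by omega), Function.comp_apply,
      sD_mid hk (by omega)]
    have hb : ∀ (m' : Fin n), blkD n (k+1) (k + (d+1)) x m' =
        if (m' : ℕ) = k then xval x (k + (d+1))
        else if k + 1 ≤ (m' : ℕ) ∧ (m' : ℕ) ≤ k + (d+1) then xval x ((m' : ℕ) - 1)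
        else x m' := by
      intro m'
      rw [hkd, ih (k+1) (by omega) (by omega) m']
      simp only [Nat.add_sub_cancel]
    by_cases h1 : (m : ℕ) = k - 1
    · rw [if_pos h1, if_pos h1, xval_lt _ (show k < n by omega), hb]
      simp
    · rw [if_neg h1, if_neg h1]
      by_cases h2 : (m : ℕ) = k
      · rw [if_pos h2, if_pos ⟨by omega, by omega⟩, h2,
          xval_lt _ (show k - 1 < n by omega), hb]
        simp only [Fin.val_mk]
        rw [if_neg (by omega), if_neg (by omega),
          xval_lt x (show k - 1 < n by omega)]
      · rw [if_neg h2, hb m]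
        rw [if_neg h2]
        by_cases h3 : k + 1 ≤ (m : ℕ) ∧ (m : ℕ) ≤ k + (d + 1)
        · rw [if_pos h3, if_pos ⟨by omega, by omega⟩]
        · rw [if_neg h3, if_neg (by omega)]


def Traux (n i r : ℕ) : (Fin n → ℝ) → (Fin n → ℝ) :=
  ((List.range' 1 r).reverse).foldr (fun m f => blkD n m (m + i - 1) ∘ f) id

lemma Traux_succ (n i r : ℕ) :
    Traux n i (r + 1) = blkD n (r + 1) (r + 1 + i - 1) ∘ Traux n i r := by
  unfold Traux
  rw [List.range'_1_concat, List.reverse_append]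
  simp only [List.reverse_singleton, List.singleton_append, List.foldr_cons,
    Nat.add_comm 1 r]

lemma tr_apply {n : ℕ} (i r : ℕ) (hi : 1 ≤ i) (hr : r + i ≤ n) (x : Fin n → ℝ) (m : Fin n) :
    Traux n i r x m =
      if (m : ℕ) < r then xval x ((m : ℕ) + i)
      else if (m : ℕ) < r + i then xval x ((m : ℕ) - r)
      else x m := by
  induction r generalizing m with
  | zero =>
    simp only [Traux, List.range'_zero, List.reverse_nil, List.foldr_nil, id_eq]
    rw [if_neg (by omega)]
    by_cases h : (m : ℕ) < 0 + i
    · rw [if_pos h, Nat.sub_zero, xval_coe]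
    · rw [if_neg h]
  | succ r ih =>
    rw [Traux_succ, Function.comp_apply]
    have he : r + 1 + i - 1 = (r + 1) + (i - 1) := by omega
    rw [he, blk_apply (i - 1) (r + 1) (by omega) (by omega)]
    have hb : ∀ t (h : t < n), Traux n i r x ⟨t, h⟩ =
        if t < r then xval x (t + i)
        else if t < r + i then xval x (t - r)
        else x ⟨t, h⟩ := by
      intro t h
      rw [ih (by omega) ⟨t, h⟩]
    by_cases h1 : (m : ℕ) = r
    · rw [if_pos (by omega : (m:ℕ) = (r+1) - 1),
        xval_lt _ (show (r+1)+(i-1) < n by omega), hb]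
      rw [if_neg (show ¬ ((r+1)+(i-1) < r) by omega),
        if_neg (show ¬ ((r+1)+(i-1) < r + i) by omega),
        if_pos (show (m:ℕ) < r + 1 by omega),
        xval_lt x (show (m:ℕ) + i < n by omega)]
      congr 1
      exact Fin.ext (show (r+1)+(i-1) = (m:ℕ) + i by omega)
    · rw [if_neg (show ¬ ((m:ℕ) = (r+1) - 1) by omega)]
      by_cases h2 : r + 1 ≤ (m : ℕ) ∧ (m : ℕ) ≤ (r + 1) + (i - 1)
      · rw [if_pos h2, xval_lt _ (show (m:ℕ) - 1 < n by omega), hb]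
        rw [if_neg (show ¬ ((m:ℕ) - 1 < r) by omega),
          if_pos (show (m:ℕ) - 1 < r + i by omega),
          if_neg (show ¬ ((m:ℕ) < r + 1) by omega),
          if_pos (show (m:ℕ) < (r+1) + i by omega)]
        congr 1 <;> omega
      · rw [if_neg h2, ih (by omega) m]
        by_cases h3 : (m : ℕ) < r
        · rw [if_pos h3, if_pos (show (m:ℕ) < r + 1 by omega)]
        · rw [if_neg h3, if_neg (show ¬ ((m:ℕ) < r + i) by omega),
            if_neg (show ¬ ((m:ℕ) < r + 1) by omega),
            if_neg (show ¬ ((m:ℕ) < (r+1) + i) by omega)]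


lemma sD_top {n : ℕ} (hn : 1 ≤ n) (x : Fin n → ℝ) (k : Fin n) :
    sD n n x k = if (k : ℕ) = n - 2 then -xval x (n - 1)
      else if (k : ℕ) = n - 1 then -xval x (n - 2) else x k := by
  unfold sD
  rw [if_neg (by omega), if_pos rfl]

lemma sD_zero {n : ℕ} (x : Fin n → ℝ) (k : Fin n) :
    sD n 0 x k = if (k : ℕ) = 0 then 1 - xval x 1
      else if (k : ℕ) = 1 then 1 - xval x 0 else x k := by
  unfold sD
  rw [if_pos rfl]

lemma P_apply {n : ℕ} (hn : 4 ≤ n) (x : Fin n → ℝ) (m : Fin n) :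
    (sD n 0 ∘ blkD n 2 (n - 1) ∘ blkD n 1 (n - 2) ∘ sD n n) x m =
      if (m : ℕ) = 0 then 1 + xval x (n - 2)
      else if (m : ℕ) = 1 then 1 + xval x (n - 1)
      else xval x ((m : ℕ) - 2) := by
  have ha : ∀ t (h : t < n), sD n n x ⟨t, h⟩ =
      if t = n - 2 then -xval x (n - 1)
      else if t = n - 1 then -xval x (n - 2) else x ⟨t, h⟩ := by
    intro t h
    rw [sD_top (by omega)]
  have hb : ∀ t (h : t < n), blkD n 1 (n - 2) (sD n n x) ⟨t, h⟩ =
      if t = 0 then -xval x (n - 1)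
      else if t ≤ n - 2 then xval x (t - 1)
      else -xval x (n - 2) := by
    intro t h
    have e1 : n - 2 = 1 + (n - 3) := by omega
    have key : blkD n 1 (n - 2) = blkD n 1 (1 + (n - 3)) := by rw [← e1]
    rw [key, blk_apply (n - 3) 1 (by omega) (by omega)]
    simp only [Fin.val_mk]
    by_cases h1 : t = 0
    · rw [if_pos (show t = 1 - 1 by omega), if_pos h1,
        xval_lt _ (show 1 + (n - 3) < n by omega), ha]
      rw [if_pos (show 1 + (n - 3) = n - 2 by omega)]
    · rw [if_neg (show ¬ (t = 1 - 1) by omega), if_neg h1]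
      by_cases h2 : 1 ≤ t ∧ t ≤ 1 + (n - 3)
      · rw [if_pos h2, if_pos (show t ≤ n - 2 by omega),
          xval_lt _ (show t - 1 < n by omega), ha]
        rw [if_neg (by omega), if_neg (by omega),
          xval_lt x (show t - 1 < n by omega)]
      · rw [if_neg h2, if_neg (show ¬ (t ≤ n - 2) by omega), ha]
        rw [if_neg (by omega), if_pos (show t = n - 1 by omega)]
  have hc : ∀ t (h : t < n), blkD n 2 (n - 1) (blkD n 1 (n - 2) (sD n n x)) ⟨t, h⟩ =
      if t = 0 then -xval x (n - 1)
      else if t = 1 then -xval x (n - 2)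
      else xval x (t - 2) := by
    intro t h
    have e1 : n - 1 = 2 + (n - 3) := by omega
    have key : blkD n 2 (n - 1) = blkD n 2 (2 + (n - 3)) := by rw [← e1]
    rw [key, blk_apply (n - 3) 2 (by omega) (by omega)]
    simp only [Fin.val_mk]
    by_cases h1 : t = 1
    · rw [if_pos (show t = 2 - 1 by omega), if_neg (by omega), if_pos h1,
        xval_lt _ (show 2 + (n - 3) < n by omega), hb]
      rw [if_neg (by omega), if_neg (show ¬ (2 + (n - 3) ≤ n - 2) by omega)]
    · rw [if_neg (show ¬ (t = 2 - 1) by omega), if_neg h1]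
      by_cases h2 : 2 ≤ t ∧ t ≤ 2 + (n - 3)
      · rw [if_pos h2, if_neg (by omega),
          xval_lt _ (show t - 1 < n by omega), hb]
        rw [if_neg (by omega), if_pos (show t - 1 ≤ n - 2 by omega)]
        congr 1
      · have h0 : t = 0 := by omega
        rw [if_neg h2, hb, if_pos h0]
        rw [if_pos h0]
  rw [show ((sD n 0 ∘ blkD n 2 (n - 1) ∘ blkD n 1 (n - 2) ∘ sD n n) x m)
      = sD n 0 (blkD n 2 (n - 1) (blkD n 1 (n - 2) (sD n n x))) m from rfl,
    sD_zero]
  by_cases h1 : (m : ℕ) = 0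
  · rw [if_pos h1, if_pos h1, xval_lt _ (show 1 < n by omega), hc]
    rw [if_neg (by omega), if_pos rfl]
    ring
  · rw [if_neg h1, if_neg h1]
    by_cases h2 : (m : ℕ) = 1
    · rw [if_pos h2, if_pos h2, xval_lt _ (show 0 < n by omega), hc]
      rw [if_pos rfl]
      ring
    · rw [if_neg h2, if_neg h2,
        show (blkD n 2 (n - 1) (blkD n 1 (n - 2) (sD n n x)) m)
          = (blkD n 2 (n - 1) (blkD n 1 (n - 2) (sD n n x)) ⟨(m : ℕ), m.isLt⟩) from rfl,
        hc]
      rw [if_neg h1, if_neg h2]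


lemma Pit {n : ℕ} (hn : 4 ≤ n) (q : ℕ) (hq : 2 * q ≤ n) (x : Fin n → ℝ) (k : Fin n) :
    (sD n 0 ∘ blkD n 2 (n - 1) ∘ blkD n 1 (n - 2) ∘ sD n n)^[q] x k =
      if (k : ℕ) < 2 * q then 1 + xval x (n - 2 * q + (k : ℕ))
      else xval x ((k : ℕ) - 2 * q) := by
  induction q generalizing x with
  | zero =>
    rw [Function.iterate_zero, id_eq, if_neg (by omega), Nat.mul_zero,
      Nat.sub_zero, xval_coe]
  | succ q ih =>
    rw [Function.iterate_succ_apply, ih (by omega)]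
    have hP : ∀ t (h : t < n),
        (sD n 0 ∘ blkD n 2 (n - 1) ∘ blkD n 1 (n - 2) ∘ sD n n) x ⟨t, h⟩ =
          if t = 0 then 1 + xval x (n - 2)
          else if t = 1 then 1 + xval x (n - 1)
          else xval x (t - 2) := by
      intro t h
      rw [P_apply hn]
    by_cases h1 : (k : ℕ) < 2 * q
    · rw [if_pos h1, if_pos (show (k : ℕ) < 2 * (q + 1) by omega),
        xval_lt _ (show n - 2 * q + (k : ℕ) < n by omega), hP]
      rw [if_neg (by omega), if_neg (by omega)]
      congr 2 <;> omega
    · rw [if_neg h1,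
        xval_lt _ (show (k : ℕ) - 2 * q < n by omega), hP]
      by_cases h2 : (k : ℕ) = 2 * q
      · rw [if_pos (show (k : ℕ) - 2 * q = 0 by omega),
          if_pos (show (k : ℕ) < 2 * (q + 1) by omega)]
        congr 2 <;> omega
      · by_cases h3 : (k : ℕ) = 2 * q + 1
        · rw [if_neg (by omega), if_pos (show (k : ℕ) - 2 * q = 1 by omega),
            if_pos (show (k : ℕ) < 2 * (q + 1) by omega)]
          congr 2 <;> omega
        · rw [if_neg (by omega), if_neg (by omega),
            if_neg (show ¬ ((k : ℕ) < 2 * (q + 1)) by omega)]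
          congr 1 <;> omega

/-- In type `D_n^{(1)}`, for even `i` with `2 ≤ i ≤ n−2`,
`(s₀ ∘ [2,n−1] ∘ [1,n−2] ∘ sₙ)^{i/2} ∘ [n−i,n−1] ∘ ⋯ ∘ [1,i]`
is the translation by `e₁ + ⋯ + e_i`. -/
theorem statement5 (n i : ℕ) (hn : 4 ≤ n) (hi2 : 2 ≤ i) (hin : i ≤ n - 2) (hi : Even i) :
    (sD n 0 ∘ blkD n 2 (n - 1) ∘ blkD n 1 (n - 2) ∘ sD n n)^[i / 2] ∘ trailD n i
      = fun x => x + (fun (k : Fin n) => if (k : ℕ) < i then (1 : ℝ) else 0) := by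
  have htr : trailD n i = Traux n i (n - i) := rfl
  have h2q : 2 * (i / 2) = i := by
    obtain ⟨j, hj⟩ := hi
    omega
  funext x
  funext k
  rw [Function.comp_apply, htr, Pit hn (i / 2) (by omega), h2q, Pi.add_apply]
  have hT : ∀ t (h : t < n), Traux n i (n - i) x ⟨t, h⟩ =
      if t < n - i then xval x (t + i)
      else if t < (n - i) + i then xval x (t - (n - i))
      else x ⟨t, h⟩ := by
    intro t h
    rw [tr_apply i (n - i) (by omega) (by omega)]
  by_cases h1 : (k : ℕ) < i
  · rw [if_pos h1, if_pos h1,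
      xval_lt _ (show n - i + (k : ℕ) < n by omega), hT]
    rw [if_neg (by omega), if_pos (by omega),
      show n - i + (k : ℕ) - (n - i) = (k : ℕ) by omega, xval_coe]
    ring
  · rw [if_neg h1, if_neg h1,
      xval_lt _ (show (k : ℕ) - i < n by omega), hT]
    rw [if_pos (show (k : ℕ) - i < n - i by omega),
      show (k : ℕ) - i + i = (k : ℕ) by omega, xval_coe]
    ring

end
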